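/- Let U and V be left ℍ-modules with distinguished subspaces U' = {0} and V' = {0}, so that U^† = U^× and V^† = V^×. Then the quaternionic tensor product U ⊗_ℍ V, defined as the intersection (ι_U(U) ⊗ (V^†)^*) ∩ ((U^†)^* ⊗ ι_V(V)) inside ℍ ⊗ (U^†)^* ⊗ (V^†)^*, is the zero module. -/

import Mathlib

open Module

local notation "ℍ" => Quaternion ℝ

noncomputable section

/-- The imaginary quaternions, as a real subspace of `ℍ`. -/
def ImH : Submodule ℝ ℍ where
  carrier := {x | x.re = 0}
  add_mem' := by
    intro a b ha hb
    simp only [Set.mem_setOf_eq] at *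
    simp [ha, hb]
  zero_mem' := by simp [Quaternion.re_zero]
  smul_mem' := by
    intro c x hx
    simp only [Set.mem_setOf_eq] at *
    simp [hx]

variable {U : Type*} [AddCommGroup U] [Module ℝ U] [Module ℍ U]
variable {V : Type*} [AddCommGroup V] [Module ℝ V] [Module ℍ V]
variable {W : Type*} [AddCommGroup W] [Module ℝ W] [Module ℍ W]
variable {X : Type*} [AddCommGroup X] [Module ℝ X] [Module ℍ X]

/-- `U^†`: the real subspace of those real-linear maps `U → ℍ` that are `ℍ`-linear
and map the distinguished subspace `U'` into the imaginary quaternions. -/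
def AHDual (U' : Submodule ℝ U) : Submodule ℝ (U →ₗ[ℝ] ℍ) where
  carrier := {α | (∀ (c : ℍ) (u : U), α (c • u) = c * α u) ∧ ∀ u ∈ U', (α u).re = 0}
  zero_mem' := ⟨fun c u => by simp, fun u hu => by simp [Quaternion.re_zero]⟩
  add_mem' := by
    rintro a b ⟨ha1, ha2⟩ ⟨hb1, hb2⟩
    exact ⟨fun c u => by simp [ha1 c u, hb1 c u, mul_add],
           fun u hu => by simp [ha2 u hu, hb2 u hu]⟩
  smul_mem' := by
    rintro r α ⟨h1, h2⟩
    refine ⟨fun c u => ?_, fun u hu => ?_⟩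
    · simp [h1 c u, mul_smul_comm]
    · simp [h2 u hu]

/-- The AH-module condition: `U^†` separates points of `U`. -/
def IsAH (U' : Submodule ℝ U) : Prop :=
  ∀ u : U, (∀ α : U →ₗ[ℝ] ℍ, α ∈ AHDual U' → α u = 0) → u = 0

/-- The map `ι_U : U → ((U^†) →ₗ ℍ)`, `ι_U(u)(α) = α(u)`. -/
def iotaAH (U' : Submodule ℝ U) : U →ₗ[ℝ] (↥(AHDual U') →ₗ[ℝ] ℍ) where
  toFun u :=
    { toFun := fun α => (α : U →ₗ[ℝ] ℍ) u
      map_add' := fun a b => rfl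
      map_smul' := fun r a => rfl }
  map_add' := fun u v => LinearMap.ext fun α => by simp
  map_smul' := fun r u => LinearMap.ext fun α => by simp

@[simp] theorem iotaAH_apply (U' : Submodule ℝ U) (u : U) (α : ↥(AHDual U')) :
    iotaAH U' u α = (α : U →ₗ[ℝ] ℍ) u := rfl

/-- The quaternionic tensor product `U ⊗_ℍ V`, realised as the subspace of real-bilinear
maps `U^† × V^† → ℍ` all of whose slices lie in `ι_U(U)` resp. `ι_V(V)`. -/
def QTP (U' : Submodule ℝ U) (V' : Submodule ℝ V) :
    Submodule ℝ (↥(AHDual U') →ₗ[ℝ] ↥(AHDual V') →ₗ[ℝ] ℍ) where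
  carrier := {B | (∀ β, ∃ u : U, ∀ α, B α β = iotaAH U' u α) ∧
                  (∀ α, ∃ v : V, ∀ β, B α β = iotaAH V' v β)}
  zero_mem' :=
    ⟨fun β => ⟨0, fun α => by simp⟩, fun α => ⟨0, fun β => by simp⟩⟩
  add_mem' := by
    rintro B C ⟨hB1, hB2⟩ ⟨hC1, hC2⟩
    refine ⟨fun β => ?_, fun α => ?_⟩
    · obtain ⟨u, hu⟩ := hB1 β; obtain ⟨u', hu'⟩ := hC1 β
      exact ⟨u + u', fun α => by simp [hu α, hu' α]⟩
    · obtain ⟨v, hv⟩ := hB2 α; obtain ⟨v', hv'⟩ := hC2 α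
      exact ⟨v + v', fun β => by simp [hv β, hv' β]⟩
  smul_mem' := by
    rintro r B ⟨h1, h2⟩
    refine ⟨fun β => ?_, fun α => ?_⟩
    · obtain ⟨u, hu⟩ := h1 β; exact ⟨r • u, fun α => by simp [hu α]⟩
    · obtain ⟨v, hv⟩ := h2 α; exact ⟨r • v, fun β => by simp [hv β]⟩

/-- The left action of a quaternion `c` on the ambient space of `U ⊗_ℍ V`. -/
def hsmulBil (U' : Submodule ℝ U) (V' : Submodule ℝ V) (c : ℍ) :
    (↥(AHDual U') →ₗ[ℝ] ↥(AHDual V') →ₗ[ℝ] ℍ) →ₗ[ℝ]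
      (↥(AHDual U') →ₗ[ℝ] ↥(AHDual V') →ₗ[ℝ] ℍ) where
  toFun B :=
    { toFun := fun α =>
        { toFun := fun β => c * B α β
          map_add' := fun b b' => by simp [mul_add]
          map_smul' := fun r b => by simp [mul_smul_comm] }
      map_add' := fun a a' => LinearMap.ext fun β => by simp [mul_add]
      map_smul' := fun r a => LinearMap.ext fun β => by simp [mul_smul_comm] }
  map_add' := fun B B' => LinearMap.ext fun α => LinearMap.ext fun β => by simp [mul_add]
  map_smul' := fun r B => LinearMap.ext fun α => LinearMap.ext fun β => by simp [mul_smul_comm]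

@[simp] theorem hsmulBil_apply (U' : Submodule ℝ U) (V' : Submodule ℝ V) (c : ℍ)
    (B : ↥(AHDual U') →ₗ[ℝ] ↥(AHDual V') →ₗ[ℝ] ℍ) (α : ↥(AHDual U')) (β : ↥(AHDual V')) :
    hsmulBil U' V' c B α β = c * B α β := rfl

theorem hsmulBil_mem {U' : Submodule ℝ U} {V' : Submodule ℝ V} (c : ℍ)
    {B : ↥(AHDual U') →ₗ[ℝ] ↥(AHDual V') →ₗ[ℝ] ℍ} (hB : B ∈ QTP U' V') :
    hsmulBil U' V' c B ∈ QTP U' V' := by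
  obtain ⟨h1, h2⟩ := hB
  constructor
  · intro β
    obtain ⟨u, hu⟩ := h1 β
    refine ⟨c • u, fun α => ?_⟩
    have hα : (α : U →ₗ[ℝ] ℍ) (c • u) = c * (α : U →ₗ[ℝ] ℍ) u := α.2.1 c u
    rw [hsmulBil_apply, hu α, iotaAH_apply, iotaAH_apply, hα]
  · intro α
    obtain ⟨v, hv⟩ := h2 α
    refine ⟨c • v, fun β => ?_⟩
    have hβ : (β : V →ₗ[ℝ] ℍ) (c • v) = c * (β : V →ₗ[ℝ] ℍ) v := β.2.1 c v
    rw [hsmulBil_apply, hv β, iotaAH_apply, iotaAH_apply, hβ]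

/-- The primed part of `U ⊗_ℍ V` (the intersection with `𝕀 ⊗ (U^†)^* ⊗ (V^†)^*`). -/
def QTPprimeSet (U' : Submodule ℝ U) (V' : Submodule ℝ V) : Set ↥(QTP U' V') :=
  {x | ∀ (α : ↥(AHDual U')) (β : ↥(AHDual V')),
    (((x : ↥(AHDual U') →ₗ[ℝ] ↥(AHDual V') →ₗ[ℝ] ℍ)) α β).re = 0}

/-- `X_q'`: the real subspace of quaternions anticommuting with `q`. -/
def XqP (q : ℍ) : Submodule ℝ ℍ where
  carrier := {p | p * q = -(q * p)}
  zero_mem' := by simp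
  add_mem' := by
    intro a b ha hb
    simp only [Set.mem_setOf_eq] at *
    rw [add_mul, mul_add, ha, hb, neg_add]
  smul_mem' := by
    intro r p hp
    simp only [Set.mem_setOf_eq] at *
    rw [smul_mul_assoc, hp, mul_smul_comm, smul_neg]

theorem XqP_le_im {q : ℍ} (hq : q.re = 0) (hq0 : q ≠ 0) :
    ∀ p ∈ XqP q, p.re = 0 := by
  intro p hp
  have h : p * q + q * p = 0 := by
    have h' : p * q = -(q * p) := hp
    rw [h', neg_add_cancel]
  have e1 : p.re * q.imI = 0 := by
    have := congrArg (fun x : ℍ => x.imI) h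
    simp only [Quaternion.imI_add, Quaternion.imI_mul, Quaternion.imI_zero, hq] at this
    linarith
  have e2 : p.re * q.imJ = 0 := by
    have := congrArg (fun x : ℍ => x.imJ) h
    simp only [Quaternion.imJ_add, Quaternion.imJ_mul, Quaternion.imJ_zero, hq] at this
    linarith
  have e3 : p.re * q.imK = 0 := by
    have := congrArg (fun x : ℍ => x.imK) h
    simp only [Quaternion.imK_add, Quaternion.imK_mul, Quaternion.imK_zero, hq] at this
    linarith
  by_contra hpre
  apply hq0
  ext
  · exact hq
  · exact (mul_eq_zero.mp e1).resolve_left hpre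
  · exact (mul_eq_zero.mp e2).resolve_left hpre
  · exact (mul_eq_zero.mp e3).resolve_left hpre

open Classical in
/-- The identity map `ℍ → ℍ`, as an element of `(X_q)^†` (junk value if `q` is not
a nonzero imaginary quaternion). -/
def idXqDual (q : ℍ) : ↥(AHDual (XqP q)) :=
  if h : q.re = 0 ∧ q ≠ 0 then
    ⟨(LinearMap.id : ℍ →ₗ[ℝ] ℍ),
      ⟨fun c u => by simp [smul_eq_mul], fun u hu => XqP_le_im h.1 h.2 u hu⟩⟩
  else 0

/-- The image of `id ⊗_ℍ χ_q : U ⊗_ℍ X_q → U` inside `U`. -/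
def chiImage (U' : Submodule ℝ U) (q : ℍ) : Set U :=
  {u | ∃ B ∈ QTP U' (XqP q), ∀ α : ↥(AHDual U'), B α (idXqDual q) = iotaAH U' u α}

/-- A (finite-dimensional) AH-module is semistable if it is generated as an `ℍ`-module by
the images of the maps `id ⊗_ℍ χ_q` over all nonzero imaginary `q`. -/
def Semistable (U' : Submodule ℝ U) : Prop :=
  Submodule.span ℍ (⋃ q ∈ {q : ℍ | q.re = 0 ∧ q ≠ 0}, chiImage U' q) = ⊤

/-- `U ⊗_ℍ X_q` is AH-isomorphic to the direct sum of `n` copies of `X_q`. -/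
def AHIsoNXq (U' : Submodule ℝ U) (q : ℍ) (n : ℕ) : Prop :=
  ∃ e : ↥(QTP U' (XqP q)) ≃ₗ[ℝ] (Fin n → ℍ),
    (∀ (c : ℍ) (x : ↥(QTP U' (XqP q))),
      e ⟨hsmulBil U' (XqP q) c ↑x, hsmulBil_mem c x.2⟩ = c • e x) ∧
    ((fun x => e x) '' QTPprimeSet U' (XqP q) = {f : Fin n → ℍ | ∀ i, f i ∈ XqP q})

/-- A stable AH-module with virtual dimension `r`. -/
def Stable (U' : Submodule ℝ U) (r : ℕ) : Prop :=
  Semistable U' ∧ ∀ q : ℍ, q.re = 0 → q ≠ 0 → AHIsoNXq U' q r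

/-- A stable AH-module (existentially quantified virtual dimension). -/
def IsStable (U' : Submodule ℝ U) : Prop :=
  Semistable U' ∧ ∃ j r : ℕ, finrank ℝ U = 4 * j ∧ finrank ℝ ↥U' = 2 * j + r ∧
    ∀ q : ℍ, q.re = 0 → q ≠ 0 → AHIsoNXq U' q r

/-- The dual `φ^× : V^† → U^†` of an AH-morphism `φ : U → V`. -/
def dualPull (U' : Submodule ℝ U) (V' : Submodule ℝ V) (φ : U →ₗ[ℝ] V)
    (hφH : ∀ (c : ℍ) (u : U), φ (c • u) = c • φ u) (hφ' : ∀ u ∈ U', φ u ∈ V') :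
    ↥(AHDual V') →ₗ[ℝ] ↥(AHDual U') where
  toFun γ := ⟨(γ : V →ₗ[ℝ] ℍ).comp φ,
    ⟨fun c u => by simp [hφH c u, γ.2.1], fun u hu => γ.2.2 _ (hφ' u hu)⟩⟩
  map_add' := fun a b => Subtype.ext (LinearMap.ext fun u => by simp)
  map_smul' := fun r a => Subtype.ext (LinearMap.ext fun u => by simp)

/-!
When `U' = 0`, the dual `U^†` is stable under right multiplication `α ↦ α · p` by any
quaternion. An element `B` of `U ⊗_ℍ V` is, in its first slot, evaluation at some `u ∈ U`,
so it is right `ℍ`-linear in `α`; likewise in `β`. Scaling both arguments in the two possible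
orders gives `B(α, β) q p = B(α, β) p q` for all `p, q`, and taking `p, q` noncommuting
forces `B(α, β) = 0`.
-/

theorem Quaternion.eq_zero_of_forall_mul_mul_comm {x : ℍ}
    (hx : ∀ p q : ℍ, x * q * p = x * p * q) : x = 0 := by
  set i : ℍ := ⟨0, 1, 0, 0⟩
  set j : ℍ := ⟨0, 0, 1, 0⟩
  have hcomm : x * (i * j - j * i) = 0 := by
    rw [mul_sub, ← mul_assoc, ← mul_assoc, hx, sub_self]
  have hne : i * j - j * i ≠ 0 := by
    intro h
    have himK := congrArg (fun x : ℍ => x.imK) h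
    simp only [Quaternion.imK_sub, Quaternion.imK_mul, Quaternion.imK_zero] at himK
    norm_num [i, j] at himK
  exact (mul_eq_zero.mp hcomm).resolve_right hne

def AHDual.mulRight (p : ℍ) (α : AHDual (⊥ : Submodule ℝ U)) : AHDual (⊥ : Submodule ℝ U) :=
  ⟨(LinearMap.mulRight ℝ p).comp α.1,
    fun c u => by simp [α.2.1 c u, mul_assoc],
    fun u hu => by simp [(Submodule.mem_bot ℝ).mp hu, Quaternion.re_zero]⟩

@[simp] theorem AHDual.mulRight_apply (p : ℍ) (α : AHDual (⊥ : Submodule ℝ U)) (u : U) :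
    (AHDual.mulRight p α : U →ₗ[ℝ] ℍ) u = (α : U →ₗ[ℝ] ℍ) u * p := rfl

namespace QTP

theorem apply_mulRight_left {V' : Submodule ℝ V}
    {B : AHDual (⊥ : Submodule ℝ U) →ₗ[ℝ] AHDual V' →ₗ[ℝ] ℍ} (hB : B ∈ QTP ⊥ V')
    (p : ℍ) (α : AHDual (⊥ : Submodule ℝ U)) (β : AHDual V') :
    B (AHDual.mulRight p α) β = B α β * p := by
  obtain ⟨u, hu⟩ := hB.1 β
  simp [hu]

theorem apply_mulRight_right {U' : Submodule ℝ U}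
    {B : AHDual U' →ₗ[ℝ] AHDual (⊥ : Submodule ℝ V) →ₗ[ℝ] ℍ} (hB : B ∈ QTP U' ⊥)
    (q : ℍ) (α : AHDual U') (β : AHDual (⊥ : Submodule ℝ V)) :
    B α (AHDual.mulRight q β) = B α β * q := by
  obtain ⟨v, hv⟩ := hB.2 α
  simp [hv]

theorem apply_mul_mul_comm
    {B : AHDual (⊥ : Submodule ℝ U) →ₗ[ℝ] AHDual (⊥ : Submodule ℝ V) →ₗ[ℝ] ℍ}
    (hB : B ∈ QTP ⊥ ⊥) (α : AHDual (⊥ : Submodule ℝ U)) (β : AHDual (⊥ : Submodule ℝ V))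
    (p q : ℍ) : B α β * q * p = B α β * p * q :=
  calc B α β * q * p = B (AHDual.mulRight p α) (AHDual.mulRight q β) := by
        rw [apply_mulRight_left hB, apply_mulRight_right hB]
    _ = B α β * p * q := by
        rw [apply_mulRight_right hB, apply_mulRight_left hB]

end QTP

/-- If `U` and `V` are `ℍ`-modules with `U' = V' = {0}` (so that
`U^† = U^×` and `V^† = V^×`), then the quaternionic tensor product `U ⊗_ℍ V` is zero. -/
theorem qtp_of_trivial_primes_eq_bot :
    QTP (⊥ : Submodule ℝ U) (⊥ : Submodule ℝ V) = ⊥ := by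
  refine (Submodule.eq_bot_iff _).mpr fun B hB => LinearMap.ext₂ fun α β => ?_
  exact Quaternion.eq_zero_of_forall_mul_mul_comm (QTP.apply_mul_mul_comm hB α β)

end
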